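/- arXiv:1404.4698 — 2 statements merged into one kernel-verified Lean document; each statement's English description precedes it below -/
import Mathlib

section
/- Let I ≥ 3 and N₁,…,N_I ∈ ℝ. Define N_i⁻ = ∑_{i'=1}^{I} μ_{i'-i} N_{i'} and N_i⁺ = N_i - N_i⁻, where μ is the I-periodic sequence μ_k = (I-1)/2 - k/I for k = 0,…,I-1 and indices i'-i are reduced mod I. Then N_i⁺ + N_i⁻ = N_i for all i, and this splitting minimizes ∑_{i=1}^{I} |N_i⁺ + N_{i+1}⁻|² over all splittings (N_i⁺, N_i⁻) with N_i⁺ + N_i⁻ = N_i (indices mod I). -/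
lemma emod_helper {I : ℤ} (hI : 0 < I) {x : ℤ} (h1 : -I ≤ x) (h2 : x < I) :
    x % I = if 0 ≤ x then x else x + I := by
  split_ifs with h
  · exact Int.emod_eq_of_lt h h2
  · have h3 : (x + I) % I = x + I := Int.emod_eq_of_lt (by omega) (by omega)
    rw [← Int.add_mul_emod_self_left (b := I) (c := 1), mul_one, h3]

lemma mod_diff_key {I : ℤ} (hI : 3 ≤ I) {a b : ℤ} (ha : 0 ≤ a) (ha' : a < I)
    (hb : 0 ≤ b) (hb' : b < I) :
    (a - b) % I - (a - b - 1) % I = if a = b then 1 - I else 1 := by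
  have hA := emod_helper (show (0:ℤ) < I by omega) (show -I ≤ a - b by omega)
    (show a - b < I by omega)
  have hB := emod_helper (show (0:ℤ) < I by omega) (show -I ≤ a - b - 1 by omega)
    (show a - b - 1 < I by omega)
  rw [hA, hB]
  split_ifs <;> omega

theorem neumann_splitting_minimizes (I : ℕ) [NeZero I] (hI : 3 ≤ I)
    (μ : ℤ → ℝ)
    (hμ : ∀ k : ℤ, μ k = ((I : ℝ) - 1) / 2 - ((k % (I : ℤ) : ℤ) : ℝ) / I)
    (N Nminus Nplus : Fin I → ℝ)
    (hNm : ∀ i : Fin I, Nminus i = ∑ i' : Fin I, μ ((i' : ℤ) - (i : ℤ)) * N i')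
    (hNp : ∀ i : Fin I, Nplus i = N i - Nminus i) :
    (∀ i : Fin I, Nplus i + Nminus i = N i) ∧
    (∀ P Q : Fin I → ℝ, (∀ i : Fin I, P i + Q i = N i) →
      ∑ i : Fin I, (Nplus i + Nminus (i + 1)) ^ 2 ≤
        ∑ i : Fin I, (P i + Q (i + 1)) ^ 2) := by
  have hIpos : (0:ℝ) < I := by
    have : 0 < I := by omega
    exact_mod_cast this
  have hI0 : (I:ℝ) ≠ 0 := ne_of_gt hIpos
  set S := ∑ j : Fin I, N j with hS
  -- value of (i+1 : Fin I) as an integer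
  have hv : ∀ i : Fin I, ((i + 1 : Fin I) : ℤ) = ((i:ℤ) + 1) % (I:ℤ) := by
    intro i
    have h1 : ((i + 1 : Fin I) : ℕ) = ((i:ℕ) + 1) % I := by
      rw [Fin.add_def]
      simp [Fin.val_one', Nat.mod_eq_of_lt (show 1 < I by omega)]
    calc ((i + 1 : Fin I) : ℤ) = ((((i:ℕ) + 1) % I : ℕ) : ℤ) := by exact_mod_cast h1
      _ = ((i:ℤ) + 1) % (I:ℤ) := by push_cast; ring_nf
  -- key computation: μ difference
  have hμdiff : ∀ i i' : Fin I,
      μ ((i' : ℤ) - ((i + 1 : Fin I) : ℤ)) - μ ((i' : ℤ) - (i : ℤ))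
        = (if i' = i then (1 - (I:ℝ)) / I else 1 / I) := by
    intro i i'
    rw [hμ, hμ]
    have hB : (((i':ℤ) - ((i + 1 : Fin I):ℤ)) % (I:ℤ)) = (((i':ℤ) - (i:ℤ) - 1) % (I:ℤ)) := by
      rw [hv]
      have : (i':ℤ) - (i:ℤ) - 1 = (i':ℤ) - ((i:ℤ) + 1) := by ring
      rw [this, Int.sub_emod, Int.emod_emod_of_dvd _ dvd_rfl, ← Int.sub_emod]
    rw [hB]
    have hk := mod_diff_key (I := (I:ℤ)) (by exact_mod_cast hI) (a := (i':ℤ)) (b := (i:ℤ))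
      (Int.ofNat_nonneg _) (by exact_mod_cast i'.isLt) (Int.ofNat_nonneg _)
      (by exact_mod_cast i.isLt)
    have habs : ((((i':ℤ) - (i:ℤ)) % I : ℤ):ℝ) - ((((i':ℤ) - (i:ℤ) - 1) % I : ℤ):ℝ)
        = if i' = i then 1 - (I:ℝ) else 1 := by
      by_cases h : i' = i
      · rw [if_pos h]
        rw [if_pos (by rw [h])] at hk
        exact_mod_cast hk
      · rw [if_neg h]
        rw [if_neg (fun hc => h (Fin.ext (by exact_mod_cast hc)))] at hk
        exact_mod_cast hk
    have final : ∀ u v : ℝ, u - v = (if i' = i then 1 - (I:ℝ) else 1) →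
        ((I:ℝ) - 1) / 2 - v / I - (((I:ℝ) - 1) / 2 - u / I)
          = if i' = i then (1 - (I:ℝ)) / I else 1 / I := by
      intro u v huv
      rw [show ((I:ℝ) - 1) / 2 - v / I - (((I:ℝ) - 1) / 2 - u / I) = (u - v) / I from by ring,
        huv]
      split_ifs <;> rfl
    exact final _ _ habs
  -- Nminus difference
  have hdiff : ∀ i : Fin I, Nminus (i + 1) - Nminus i = S / I - N i := by
    intro i
    rw [hNm, hNm, ← Finset.sum_sub_distrib]
    have e : ∀ i' ∈ (Finset.univ : Finset (Fin I)), μ ((i' : ℤ) - ((i + 1 : Fin I) : ℤ)) * N i'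
        - μ ((i' : ℤ) - (i : ℤ)) * N i'
        = N i' / I - (if i' = i then N i' else 0) := by
      intro i' _
      have : μ ((i' : ℤ) - ((i + 1 : Fin I) : ℤ)) * N i' - μ ((i' : ℤ) - (i : ℤ)) * N i'
          = (μ ((i' : ℤ) - ((i + 1 : Fin I) : ℤ)) - μ ((i' : ℤ) - (i : ℤ))) * N i' := by ring
      rw [this, hμdiff i i']
      split_ifs with h
      · field_simp
      · rw [sub_zero]
        ring
    rw [Finset.sum_congr rfl e, Finset.sum_sub_distrib, Finset.sum_ite_eq' Finset.univ i N]
    rw [← Finset.sum_div, ← hS]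
    simp
  -- the splitting is constant
  have key : ∀ i : Fin I, Nplus i + Nminus (i + 1) = S / I := by
    intro i
    rw [hNp]
    have := hdiff i
    linarith
  refine ⟨fun i => by rw [hNp]; ring, ?_⟩
  intro P Q hPQ
  set c := S / I with hc
  have hLHS : ∑ i : Fin I, (Nplus i + Nminus (i + 1)) ^ 2 = (I:ℝ) * c ^ 2 := by
    simp_rw [key]
    rw [Finset.sum_const, Finset.card_univ, Fintype.card_fin, nsmul_eq_mul]
  have hsumQ : ∑ i : Fin I, Q (i + 1) = ∑ i : Fin I, Q i :=
    Fintype.sum_equiv (Equiv.addRight (1 : Fin I)) _ _ (fun i => rfl)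
  have hsumg : ∑ i : Fin I, (P i + Q (i + 1)) = S := by
    rw [Finset.sum_add_distrib, hsumQ, ← Finset.sum_add_distrib]
    exact Finset.sum_congr rfl (fun i _ => hPQ i)
  have h1 : 0 ≤ ∑ i : Fin I, (P i + Q (i + 1) - c) ^ 2 :=
    Finset.sum_nonneg fun i _ => sq_nonneg _
  have h2 : ∑ i : Fin I, (P i + Q (i + 1) - c) ^ 2
      = ∑ i : Fin I, (P i + Q (i + 1)) ^ 2 - (2 * c) * S + (I:ℝ) * c ^ 2 := by
    have e : ∀ i : Fin I, (P i + Q (i + 1) - c) ^ 2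
        = (P i + Q (i + 1)) ^ 2 - (2 * c) * (P i + Q (i + 1)) + c ^ 2 := fun i => by ring
    simp_rw [e]
    rw [Finset.sum_add_distrib, Finset.sum_sub_distrib, ← Finset.mul_sum, hsumg,
      Finset.sum_const, Finset.card_univ, Fintype.card_fin, nsmul_eq_mul]
  have h3 : (I:ℝ) * c = S := by
    rw [hc, mul_div_cancel₀ _ hI0]
  have h4 : (I:ℝ) * c ^ 2 = S * c := by
    rw [pow_two, ← mul_assoc, h3]
  rw [hLHS]
  linarith
end

section
/- Let I ≥ 3, N ∈ ℝ^I, and define the Neumann exchange map (A_N N)_i := -N_{i+1}⁻ - N_{i-1}⁺ where N_i⁻ = ∑_{i'} μ_{i'-i} N_{i'} and N_i⁺ = N_i - N_i⁻ with μ_k = (I-1)/2 - k/I (I-periodic). Then (A_N N)_i = N_i - (2/I) ∑_{i'=1}^{I} N_{i'} for all i. -/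
lemma emod_tri (Iz z : ℤ) (hI : 0 < Iz) (h1 : -Iz ≤ z) (h2 : z ≤ Iz) :
    z % Iz = z ∨ z % Iz = z + Iz ∨ z % Iz = z - Iz := by
  rcases le_or_gt 0 z with h | h
  · rcases lt_or_eq_of_le h2 with h2' | h2'
    · exact Or.inl (Int.emod_eq_of_lt h h2')
    · right; right; subst h2'; simp
  · right; left
    have h3 : z % Iz = (z + Iz * 1) % Iz := (Int.add_mul_emod_self_left z Iz 1).symm
    rw [h3]
    have : z + Iz * 1 = z + Iz := by ring
    rw [this]
    exact Int.emod_eq_of_lt (by omega) (by omega)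

lemma keyInt (Iz x y : ℤ) (hI : 3 ≤ Iz) (hx0 : 0 ≤ x) (hx : x < Iz)
    (hy0 : 0 ≤ y) (hy : y < Iz) :
    (x - (y + 1) % Iz) % Iz - (x - (y + (Iz - 1)) % Iz) % Iz
      = (if x = y then Iz else 0) + (if x = (y + (Iz - 1)) % Iz then Iz else 0) - 2 := by
  have hIpos : 0 < Iz := by omega
  have hne : Iz ≠ 0 := by omega
  have hd : (y + (Iz - 1)) % Iz = (y - 1) % Iz := by
    have h : y + (Iz - 1) = y - 1 + Iz * 1 := by ring
    rw [h, Int.add_mul_emod_self_left]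
  have hA : (x - (y + 1) % Iz) % Iz = (x - y - 1) % Iz := by
    rw [Int.sub_emod, Int.emod_emod_of_dvd _ dvd_rfl, ← Int.sub_emod]
    congr 1; ring
  have hB : (x - (y + (Iz - 1)) % Iz) % Iz = (x - y + 1) % Iz := by
    rw [hd, Int.sub_emod, Int.emod_emod_of_dvd _ dvd_rfl, ← Int.sub_emod]
    congr 1; ring
  rw [hA, hB, hd]
  have ta := emod_tri Iz (x - y - 1) hIpos (by omega) (by omega)
  have tb := emod_tri Iz (x - y + 1) hIpos (by omega) (by omega)
  have td := emod_tri Iz (y - 1) hIpos (by omega) (by omega)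
  have na := Int.emod_nonneg (x - y - 1) hne
  have nb := Int.emod_nonneg (x - y + 1) hne
  have nd := Int.emod_nonneg (y - 1) hne
  have la := Int.emod_lt_of_pos (x - y - 1) hIpos
  have lb := Int.emod_lt_of_pos (x - y + 1) hIpos
  have ld := Int.emod_lt_of_pos (y - 1) hIpos
  split_ifs <;> omega

theorem neumann_exchange_formula (I : ℕ) [NeZero I] (hI : 3 ≤ I)
    (μ : ℤ → ℝ)
    (hμ : ∀ k : ℤ, μ k = ((I : ℝ) - 1) / 2 - ((k % (I : ℤ) : ℤ) : ℝ) / I)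
    (N Nminus Nplus : Fin I → ℝ)
    (hNm : ∀ i : Fin I, Nminus i = ∑ i' : Fin I, μ ((i' : ℤ) - (i : ℤ)) * N i')
    (hNp : ∀ i : Fin I, Nplus i = N i - Nminus i) :
    ∀ i : Fin I, -Nminus (i + 1) - Nplus (i - 1) =
      N i - (2 / (I : ℝ)) * ∑ i' : Fin I, N i' := by
  intro i
  have hI0 : (I : ℝ) ≠ 0 := by
    have : 0 < I := by omega
    exact_mod_cast this.ne'
  have h1v : (1 : Fin I).val = 1 := by
    rw [Fin.val_one' I, Nat.mod_eq_of_lt (by omega)]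
  have hv1 : ((i + 1 : Fin I) : ℕ) = ((i : ℕ) + 1) % I := by
    rw [Fin.add_def, h1v]
  have hv2 : ((i - 1 : Fin I) : ℕ) = (I - 1 + (i : ℕ)) % I := by
    rw [Fin.sub_def, h1v]
  have e1 : (((i + 1 : Fin I) : ℕ) : ℤ) = ((i : ℤ) + 1) % (I : ℤ) := by
    rw [hv1]; push_cast; ring_nf
  have e2 : (((i - 1 : Fin I) : ℕ) : ℤ) = ((i : ℤ) + ((I : ℤ) - 1)) % (I : ℤ) := by
    rw [hv2]; push_cast [Nat.cast_sub (by omega : 1 ≤ I)]; ring_nf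
  have key : ∀ i' : Fin I,
      μ ((i' : ℤ) - ((i - 1 : Fin I) : ℤ)) - μ ((i' : ℤ) - ((i + 1 : Fin I) : ℤ))
        = (if i' = i then 1 else 0) + (if i' = i - 1 then 1 else 0) - 2 / (I : ℝ) := by
    intro i'
    have hint := keyInt (I : ℤ) (i' : ℤ) (i : ℤ) (by exact_mod_cast hI)
      (Int.natCast_nonneg _) (by exact_mod_cast i'.isLt)
      (Int.natCast_nonneg _) (by exact_mod_cast i.isLt)
    have c1 : (i' = i) ↔ ((i' : ℤ) = (i : ℤ)) := by
      simp [Fin.ext_iff]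
    have c2 : (i' = i - 1) ↔ ((i' : ℤ) = ((i : ℤ) + ((I : ℤ) - 1)) % (I : ℤ)) := by
      rw [← e2]; simp [Fin.ext_iff]
    have hgen : ∀ A B : ℤ, ∀ r : ℝ, ((A : ℝ) - B = r * I - 2) →
        (((I : ℝ) - 1) / 2 - (B : ℝ) / I) - (((I : ℝ) - 1) / 2 - (A : ℝ) / I)
          = r - 2 / (I : ℝ) := by
      intro A B r h
      have e : ((I : ℝ) - 1) / 2 - (B : ℝ) / I - (((I : ℝ) - 1) / 2 - (A : ℝ) / I)
          = ((A : ℝ) - B) / I := by ring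
      rw [e, h, sub_div, mul_div_cancel_right₀ _ hI0]
    rw [hμ, hμ, e1, e2]
    simp only [c1, c2]
    split_ifs at hint ⊢ <;>
      exact hgen _ _ _ (by
        have h' := congrArg (fun z : ℤ => (z : ℝ)) hint
        push_cast at h'
        linarith)
  rw [hNp, hNm, hNm]
  have step : -(∑ i' : Fin I, μ ((i' : ℤ) - ((i + 1 : Fin I) : ℤ)) * N i')
      - (N (i - 1) - ∑ i' : Fin I, μ ((i' : ℤ) - ((i - 1 : Fin I) : ℤ)) * N i')
      = (∑ i' : Fin I, (μ ((i' : ℤ) - ((i - 1 : Fin I) : ℤ))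
          - μ ((i' : ℤ) - ((i + 1 : Fin I) : ℤ))) * N i') - N (i - 1) := by
    simp only [sub_mul, Finset.sum_sub_distrib]
    ring
  rw [step, Finset.sum_congr rfl (fun i' _ => by rw [key i'])]
  simp only [add_mul, sub_mul, ite_mul, one_mul, zero_mul,
    Finset.sum_add_distrib, Finset.sum_sub_distrib, Finset.sum_ite_eq',
    Finset.mem_univ, if_true, ← Finset.mul_sum]
  ring
end
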